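/- Let 0 → Ω → E → F → 0 be a short exact sequence of vector bundles on a variety X with rk F = f, let π : P(F) → X be the projective bundle of F, and let K := Ker(π*E(−1) → O_{P(F)}) be the kernel of the composition π*E(−1) → π*F(−1) → O_{P(F)} (the last map coming from the relative Euler sequence). Then there is a short exact sequence of vector bundles on P(F): 0 → π*Ω → K(1) → Ω^1_{P(F)/X}(1) → 0. -/

import Mathlib

open CategoryTheory CategoryTheory.Limits

/-!
Since `Ω¹_{P(F)/X}` is the kernel of `q`, the kernel `K` of `b ≫ q` is the preimage of
`Ω¹_{P(F)/X}` under `b`, i.e. the pullback of `π*E(−1) → π*F(−1)` along the Euler inclusion.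
So `b` restricts to a map `K → Ω¹_{P(F)/X}`, which is onto because `b` is, and whose kernel
is `Ker b = π*Ω(−1)`. Twisting by the exact functor `— ⊗ 𝒪(1)` preserves this short exact
sequence.
-/

open scoped Pseudoelement

namespace CategoryTheory.Abelian

variable {D : Type*} [Category D] [Abelian D] {A B C O R : D}
  (a : A ⟶ B) (b : B ⟶ C) {ι : R ⟶ C} (q : C ⟶ O) {hιq : ι ≫ q = 0}
  (hR : IsLimit (KernelFork.ofι ι hιq))

noncomputable def kernelCompToKernel : kernel (b ≫ q) ⟶ R :=
  KernelFork.IsLimit.lift' hR (kernel.ι (b ≫ q) ≫ b) (by simp) |>.1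

@[simp]
lemma kernelCompToKernel_comp :
    kernelCompToKernel b q hR ≫ ι = kernel.ι (b ≫ q) ≫ b :=
  KernelFork.IsLimit.lift' hR _ _ |>.2

lemma kernel_lift_comp_kernelCompToKernel (hab : a ≫ b = 0) (habq : a ≫ b ≫ q = 0) :
    kernel.lift (b ≫ q) a habq ≫ kernelCompToKernel b q hR = 0 := by
  have : Mono ι := Fork.IsLimit.mono hR
  rw [← cancel_mono ι, Category.assoc, kernelCompToKernel_comp, kernel.lift_ι_assoc, hab,
    zero_comp]

lemma epi_kernelCompToKernel [Epi b] : Epi (kernelCompToKernel b q hR) := by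
  have : Mono ι := Fork.IsLimit.mono hR
  apply Pseudoelement.epi_of_pseudo_surjective
  intro r
  obtain ⟨x, hx⟩ := Pseudoelement.pseudo_surjective_of_epi b (ι r)
  have hx₀ : (b ≫ q) x = 0 := by
    rw [Pseudoelement.comp_apply, hx, ← Pseudoelement.comp_apply, hιq, Pseudoelement.zero_apply]
  have hker : (ShortComplex.mk _ _ (kernel.condition (b ≫ q))).Exact :=
    ShortComplex.exact_of_f_is_kernel _ (kernelIsKernel _)
  obtain ⟨k, hk⟩ := Pseudoelement.pseudo_exact_of_exact hker x hx₀
  refine ⟨k, Pseudoelement.pseudo_injective_of_mono ι ?_⟩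
  rw [← Pseudoelement.comp_apply, kernelCompToKernel_comp, Pseudoelement.comp_apply]
  exact (congrArg b hk).trans hx

lemma exact_kernel_lift_kernelCompToKernel (hab : a ≫ b = 0)
    (hexab : (ShortComplex.mk a b hab).Exact) (habq : a ≫ b ≫ q = 0) :
    (ShortComplex.mk _ _ (kernel_lift_comp_kernelCompToKernel a b q hR hab habq)).Exact := by
  have : Mono ι := Fork.IsLimit.mono hR
  apply Pseudoelement.exact_of_pseudo_exact
  intro k hk
  have hbk : b (kernel.ι (b ≫ q) k) = 0 := by
    rw [← Pseudoelement.comp_apply, ← kernelCompToKernel_comp b q hR, Pseudoelement.comp_apply]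
    exact (congrArg ι hk).trans (Pseudoelement.apply_zero ι)
  obtain ⟨x, hx⟩ := Pseudoelement.pseudo_exact_of_exact hexab _ hbk
  refine ⟨x, Pseudoelement.pseudo_injective_of_mono (kernel.ι (b ≫ q)) ?_⟩
  rwa [← Pseudoelement.comp_apply, kernel.lift_ι]

lemma shortExact_kernel_lift_kernelCompToKernel [Mono a] [Epi b] (hab : a ≫ b = 0)
    (hexab : (ShortComplex.mk a b hab).Exact) (habq : a ≫ b ≫ q = 0) :
    (ShortComplex.mk _ _ (kernel_lift_comp_kernelCompToKernel a b q hR hab habq)).ShortExact :=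
  have := epi_kernelCompToKernel b q hR
  ⟨exact_kernel_lift_kernelCompToKernel a b q hR hab hexab habq⟩

end CategoryTheory.Abelian

theorem pullback_kernel_relative_cotangent_ses_general
    {D : Type*} [Category D] [Abelian D]
    (tw : D ⥤ D)
    [PreservesFiniteLimits tw] [PreservesFiniteColimits tw]
    (pΩ pE pF OP relΩ : D)
    (a : pΩ ⟶ pE) [Mono a] (b : pE ⟶ pF) [Epi b] (hab : a ≫ b = 0)
    (hexab : (ShortComplex.mk a b hab).Exact)
    (euler : relΩ ⟶ pF) [Mono euler] (q : pF ⟶ OP) (heq : euler ≫ q = 0)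
    (hexeq : (ShortComplex.mk euler q heq).Exact)
    (habq : a ≫ (b ≫ q) = 0) :
    ∃ (β : tw.obj (kernel (b ≫ q)) ⟶ tw.obj relΩ)
      (w : tw.map (kernel.lift (b ≫ q) a habq) ≫ β = 0),
      Mono (tw.map (kernel.lift (b ≫ q) a habq)) ∧
      Epi β ∧
      (ShortComplex.mk (tw.map (kernel.lift (b ≫ q) a habq)) β w).Exact := by
  have hses := (Abelian.shortExact_kernel_lift_kernelCompToKernel a b q hexeq.fIsKernel
    hab hexab habq).map_of_exact tw
  exact ⟨_, _, hses.mono_f, hses.epi_g, hses.exact⟩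

/-- **The short exact sequence `0 → π*Ω → K(1) → Ω¹_{P(F)/X}(1) → 0`.**
We work in an abelian category `D`, interpreted as (coherent) sheaves on the
projective bundle `π : P(F) → X` of the vector bundle `F` (of rank `f`) appearing
in a short exact sequence `0 → Ω → E → F → 0` of vector bundles on a variety `X`.
The data is interpreted as follows:
* `tw : D ⥤ D` is the (exact) twisting functor `— ⊗ 𝒪_{P(F)}(1)`;
* `pΩ`, `pE`, `pF` are `π*Ω(−1)`, `π*E(−1)`, `π*F(−1)`; `OP` is `𝒪_{P(F)}`;
  `relΩ` is the relative cotangent bundle `Ω¹_{P(F)/X}`;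
* `a : π*Ω(−1) ⟶ π*E(−1)` and `b : π*E(−1) ⟶ π*F(−1)` form the twisted pullback
  of the sequence `0 → Ω → E → F → 0` (a short exact sequence);
* `euler : Ω¹_{P(F)/X} ⟶ π*F(−1)` and `q : π*F(−1) ⟶ 𝒪_{P(F)}` form the relative
  Euler sequence `0 → Ω¹_{P(F)/X} → π*F(−1) → 𝒪_{P(F)} → 0` (a short exact sequence);
* `K := Ker(π*E(−1) → 𝒪_{P(F)})` is the kernel of the composite `b ≫ q`, and
  `π*Ω(−1) ⟶ K` is the canonical map `kernel.lift _ a _` induced by `a`.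

**Conclusion:** twisting by `𝒪_{P(F)}(1)`, there is a short exact sequence of
vector bundles on `P(F)`:  `0 → π*Ω → K(1) → Ω¹_{P(F)/X}(1) → 0`, whose first map
is the twist of the canonical map `π*Ω(−1) ⟶ K`. -/
theorem pullback_kernel_relative_cotangent_ses
    {D : Type*} [Category D] [Abelian D]
    (tw : D ⥤ D) [tw.Additive]
    [PreservesFiniteLimits tw] [PreservesFiniteColimits tw]
    (pΩ pE pF OP relΩ : D)
    (a : pΩ ⟶ pE) [Mono a] (b : pE ⟶ pF) [Epi b] (hab : a ≫ b = 0)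
    (hexab : (ShortComplex.mk a b hab).Exact)
    (euler : relΩ ⟶ pF) [Mono euler] (q : pF ⟶ OP) [Epi q] (heq : euler ≫ q = 0)
    (hexeq : (ShortComplex.mk euler q heq).Exact)
    (habq : a ≫ (b ≫ q) = 0) :
    ∃ (β : tw.obj (kernel (b ≫ q)) ⟶ tw.obj relΩ)
      (w : tw.map (kernel.lift (b ≫ q) a habq) ≫ β = 0),
      Mono (tw.map (kernel.lift (b ≫ q) a habq)) ∧
      Epi β ∧
      (ShortComplex.mk (tw.map (kernel.lift (b ≫ q) a habq)) β w).Exact :=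
  pullback_kernel_relative_cotangent_ses_general tw pΩ pE pF OP relΩ a b hab hexab euler q heq hexeq
    habq
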